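/- Let R be a ring and F : (ModuleCat R)ᵒᵖ ⥤ Ab an additive contravariant functor that is half-exact. Let B be an R-module with projective resolution ⋯ → P₁ → P₀ → B → 0, and for j ≥ 1 let ΩʲB denote the j-th syzygy (Ω⁰B = B, ΩʲB = ker(Pⱼ₋₁ ↠ Ωʲ⁻¹B)), with canonical epimorphisms Pⱼ ↠ ΩʲB and monomorphisms ΩʲB ↪ Pⱼ₋₁. Then the long sequence of abelian groups 0 → ker(F(B) → F(P₀)) → F(B) → H⁰(F(P_•)) → ker(F(ΩB) → F(P₁)) → coker(F(P₀) → F(ΩB)) → H¹(F(P_•)) → ker(F(Ω²B) → F(P₂)) → coker(F(P₁) → F(Ω²B)) → H²(F(P_•)) → ⋯, where Hʲ(F(P_•)) is the cohomology of the cochain complex F(P₀) → F(P₁) → ⋯ at F(Pⱼ), the map F(B) → F(P₀) is induced by the epimorphism P₀ ↠ B, the maps F(ΩʲB) → F(Pⱼ) are induced by the epimorphisms Pⱼ ↠ ΩʲB, the maps F(Pⱼ₋₁) → F(ΩʲB) are induced by the monomorphisms ΩʲB ↪ Pⱼ₋₁, and the remaining maps are the canonically induced ones, is exact. -/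

import Mathlib

open CategoryTheory Limits Opposite

set_option linter.unusedSectionVars false

namespace ContraRightFundamentalSeq

universe u v w

/-- The data of a projective resolution `⋯ → P₁ → P₀ → B → 0` of the module `B = S 0`
together with its syzygies `S j = Ωʲ B`, encoded by composable pairs
`Ωʲ⁺¹ B →(m j) Pⱼ →(p j) Ωʲ B` with `m j ≫ p j = 0` (each such pair is required to be a
short exact sequence in the main theorem). -/
structure SyzygyData (R : Type u) [Ring R] where
  /-- the syzygy modules, `S 0` being the given module `B` -/
  S : ℕ → ModuleCat.{v} R
  /-- the modules of the projective resolution -/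
  P : ℕ → ModuleCat.{v} R
  /-- the canonical monomorphisms `Ωʲ⁺¹ B ↪ Pⱼ` -/
  m : ∀ j, S (j + 1) ⟶ P j
  /-- the canonical epimorphisms `Pⱼ ↠ Ωʲ B` -/
  p : ∀ j, P j ⟶ S j
  wmp : ∀ j, m j ≫ p j = 0

variable {R : Type u} [Ring R]
variable (F : (ModuleCat.{v} R)ᵒᵖ ⥤ AddCommGrpCat.{w}) [F.Additive] (D : SyzygyData.{u, v} R)

namespace SyzygyData

/-- The differential `Pⱼ⁺¹ ⟶ Pⱼ` of the projective resolution. -/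
def d (j : ℕ) : D.P (j + 1) ⟶ D.P j := D.p (j + 1) ≫ D.m j

end SyzygyData

/-- `K j = ker (F(Ωʲ B) → F(Pⱼ))`, induced by the epimorphism `Pⱼ ↠ Ωʲ B`
(for `j = 0` this is `ker (F(B) → F(P₀))`). -/
noncomputable def K (j : ℕ) : AddCommGrpCat.{w} := kernel (F.map (D.p j).op)

/-- `Cok j = coker (F(Pⱼ) → F(Ωʲ⁺¹ B))`, induced by the monomorphism `Ωʲ⁺¹ B ↪ Pⱼ`. -/
noncomputable def Cok (j : ℕ) : AddCommGrpCat.{w} := cokernel (F.map (D.m j).op)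

/-- The `j`-cocycles `Z j = ker (F(Pⱼ) → F(Pⱼ₊₁))` of the cochain complex `F(P_•)`. -/
noncomputable def Z (j : ℕ) : AddCommGrpCat.{w} := kernel (F.map (D.d j).op)

/-- The canonical map `F(Ωʲ B) ⟶ Z j`. -/
noncomputable def s (j : ℕ) : F.obj (op (D.S j)) ⟶ Z F D j :=
  kernel.lift _ (F.map (D.p j).op) (by
    erw [← F.map_comp]
    show F.map ((D.p (j + 1) ≫ D.m j ≫ D.p j).op) = 0
    erw [D.wmp j, comp_zero]
    exact F.map_zero _ _)

/-- The lift `ℓ j : F(Pⱼ) ⟶ Z (j+1)` of the cochain differential. -/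
noncomputable def l (j : ℕ) : F.obj (op (D.P j)) ⟶ Z F D (j + 1) :=
  kernel.lift _ (F.map (D.d j).op) (by
    erw [← F.map_comp]
    show F.map ((D.p (j + 2) ≫ (D.m (j + 1) ≫ D.p (j + 1)) ≫ D.m j).op) = 0
    erw [D.wmp (j + 1), zero_comp, comp_zero]
    exact F.map_zero _ _)

/-- The cohomology `Hʲ(F(P_•))` of the cochain complex `F(P₀) → F(P₁) → ⋯` at `F(Pⱼ)`:
`H 0` is the kernel of `F(P₀) → F(P₁)` and `H (j+1) = Z (j+1) / im F(Pⱼ)`. -/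
noncomputable def H : ℕ → AddCommGrpCat.{w}
  | 0 => Z F D 0
  | (j + 1) => cokernel (l F D j)

/-- The kernel inclusion `K 0 = ker(F(B) → F(P₀)) ⟶ F(B)`. -/
noncomputable def ι0 : K F D 0 ⟶ F.obj (op (D.S 0)) := kernel.ι (F.map (D.p 0).op)

/-- The canonical map `F(B) ⟶ H⁰(F(P_•))`. -/
noncomputable def r0 : F.obj (op (D.S 0)) ⟶ H F D 0 := s F D 0

/-- The canonical map `Z j ⟶ K (j+1) = ker(F(Ωʲ⁺¹B) → F(Pⱼ₊₁))`, induced by the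
monomorphism `Ωʲ⁺¹ B ↪ Pⱼ`. -/
noncomputable def toK (j : ℕ) : Z F D j ⟶ K F D (j + 1) :=
  kernel.lift _ (kernel.ι (F.map (D.d j).op) ≫ F.map (D.m j).op) (by
    erw [Category.assoc, ← F.map_comp]
    exact kernel.condition _)

/-- The connecting map `Hʲ(F(P_•)) ⟶ ker(F(Ωʲ⁺¹B) → F(Pⱼ₊₁))`. -/
noncomputable def conn : ∀ j, H F D j ⟶ K F D (j + 1)
  | 0 => toK F D 0
  | (j + 1) => cokernel.desc (l F D j) (toK F D (j + 1)) (by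
      apply (cancel_mono (kernel.ι (F.map (D.p (j + 2)).op))).1
      erw [Category.assoc, zero_comp]
      show l F D j ≫ toK F D (j + 1) ≫ kernel.ι _ = 0
      erw [toK, kernel.lift_ι, l, ← Category.assoc, kernel.lift_ι, ← F.map_comp]
      show F.map (((D.m (j + 1) ≫ D.p (j + 1)) ≫ D.m j).op) = 0
      erw [D.wmp (j + 1), zero_comp]
      exact F.map_zero _ _)

/-- The canonical map `ker(F(Ωʲ⁺¹B) → F(Pⱼ₊₁)) ⟶ coker(F(Pⱼ) → F(Ωʲ⁺¹B))`. -/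
noncomputable def q (j : ℕ) : K F D (j + 1) ⟶ Cok F D j :=
  kernel.ι (F.map (D.p (j + 1)).op) ≫ cokernel.π (F.map (D.m j).op)

lemma comp_s (j : ℕ) : F.map (D.m j).op ≫ s F D (j + 1) = l F D j := by
  apply (cancel_mono (kernel.ι (F.map (D.d (j + 1)).op))).1
  erw [Category.assoc, s, kernel.lift_ι, l, kernel.lift_ι, ← F.map_comp]
  rfl

/-- The canonical map `coker(F(Pⱼ) → F(Ωʲ⁺¹B)) ⟶ Hʲ⁺¹(F(P_•))`. -/
noncomputable def toH (j : ℕ) : Cok F D j ⟶ H F D (j + 1) :=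
  cokernel.desc (F.map (D.m j).op) (s F D (j + 1) ≫ cokernel.π (l F D j)) (by
    erw [← Category.assoc, comp_s, cokernel.condition]; rfl)

lemma w₁ : ι0 F D ≫ r0 F D = 0 := by
  apply (cancel_mono (kernel.ι (F.map (D.d 0).op))).1
  erw [Category.assoc, zero_comp]
  show ι0 F D ≫ s F D 0 ≫ kernel.ι _ = 0
  erw [s, kernel.lift_ι, ι0, kernel.condition]
  rfl

lemma w₂ : r0 F D ≫ conn F D 0 = 0 := by
  apply (cancel_mono (kernel.ι (F.map (D.p 1).op))).1
  erw [Category.assoc, zero_comp]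
  show s F D 0 ≫ toK F D 0 ≫ kernel.ι _ = 0
  erw [toK, kernel.lift_ι, ← Category.assoc, s, kernel.lift_ι, ← F.map_comp, ← op_comp,
    D.wmp 0]
  exact F.map_zero _ _

lemma toK_comp_q (j : ℕ) : toK F D j ≫ q F D j = 0 := by
  erw [q, ← Category.assoc, toK, kernel.lift_ι, Category.assoc, cokernel.condition, comp_zero]

lemma w₃ : ∀ j, conn F D j ≫ q F D j = 0
  | 0 => toK_comp_q F D 0
  | (j + 1) => by
      apply (cancel_epi (cokernel.π (l F D j))).1
      erw [comp_zero, ← Category.assoc]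
      show (cokernel.π _ ≫ cokernel.desc _ _ _) ≫ q F D (j + 1) = 0
      erw [cokernel.π_desc, toK_comp_q]

lemma w₄ (j : ℕ) : q F D j ≫ toH F D j = 0 := by
  erw [q, Category.assoc, toH, cokernel.π_desc, ← Category.assoc]
  have h : kernel.ι (F.map (D.p (j + 1)).op) ≫ s F D (j + 1) = 0 := by
    apply (cancel_mono (kernel.ι (F.map (D.d (j + 1)).op))).1
    erw [Category.assoc, s, kernel.lift_ι, kernel.condition, zero_comp]
  erw [h, zero_comp]

lemma w₅ (j : ℕ) : toH F D j ≫ conn F D (j + 1) = 0 := by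
  apply (cancel_epi (cokernel.π (F.map (D.m j).op))).1
  erw [comp_zero, ← Category.assoc, toH, cokernel.π_desc, Category.assoc]
  show s F D (j + 1) ≫ cokernel.π _ ≫ cokernel.desc _ _ _ = 0
  erw [cokernel.π_desc]
  apply (cancel_mono (kernel.ι (F.map (D.p (j + 2)).op))).1
  erw [Category.assoc, zero_comp]
  show s F D (j + 1) ≫ toK F D (j + 1) ≫ kernel.ι _ = 0
  erw [toK, kernel.lift_ι, ← Category.assoc, s, kernel.lift_ι, ← F.map_comp, ← op_comp,
    D.wmp (j + 1)]
  exact F.map_zero _ _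

end ContraRightFundamentalSeq

/-!
Half-exactness of `F` on `0 → Ωʲ⁺¹B → Pⱼ → ΩʲB → 0` makes `F(ΩʲB) → F(Pⱼ) → F(Ωʲ⁺¹B)` exact.
Its first map lands in the cocycles `Zʲ ⊆ F(Pⱼ)` and its second sends `Zʲ` into
`ker(F(Ωʲ⁺¹B) → F(Pⱼ₊₁))`; restricted to these subgroups the sequence stays exact, and passing to
the quotient by coboundaries gives exactness at `Hʲ`. Exactness at the other terms holds for any
factorisation `F(Pⱼ) → F(Ωʲ⁺¹B) → F(Pⱼ₊₁)` of the differential: those are segments of the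
kernel-cokernel sequences of composites.
-/

namespace CategoryTheory.ShortComplex

variable {C : Type*} [Category C] [Abelian C]

lemma exact_of_epi_τ₁_of_mono_τ₂ {S₁ S₂ : ShortComplex C} (φ : S₁ ⟶ S₂) [Epi φ.τ₁] [Mono φ.τ₂]
    (h₂ : S₂.Exact) : S₁.Exact := by
  rw [exact_iff_exact_up_to_refinements]
  intro A x₂ hx₂
  obtain ⟨A', π, hπ, x₁, hx₁⟩ := h₂.exact_up_to_refinements (x₂ ≫ φ.τ₂)
    (by rw [Category.assoc, φ.comm₂₃, reassoc_of% hx₂, zero_comp])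
  obtain ⟨A'', π', hπ', y, hy⟩ := surjective_up_to_refinements_of_epi φ.τ₁ x₁
  refine ⟨A'', π' ≫ π, epi_comp _ _, y, ?_⟩
  rw [← cancel_mono φ.τ₂, Category.assoc, Category.assoc, Category.assoc, hx₁, reassoc_of% hy,
    φ.comm₁₂]

lemma exact_of_epi_τ₂_of_mono_τ₃ {S₁ S₂ : ShortComplex C} (φ : S₁ ⟶ S₂) [Epi φ.τ₂] [Mono φ.τ₃]
    (h₁ : S₁.Exact) : S₂.Exact :=
  have : Epi (opMap φ).τ₁ := inferInstanceAs (Epi φ.τ₃.op)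
  have : Mono (opMap φ).τ₂ := inferInstanceAs (Mono φ.τ₂.op)
  (exact_of_epi_τ₁_of_mono_τ₂ (opMap φ) h₁.op).unop

lemma exact_kernelι_kernelLift {X Y W : C} {f : X ⟶ Y} {g : Y ⟶ W} (w : f ≫ g = 0) :
    (ShortComplex.mk (kernel.ι f) (kernel.lift g f w) (by ext; simp)).Exact :=
  exact_of_epi_τ₁_of_mono_τ₂ (S₂ := ShortComplex.mk _ _ (kernel.condition f))
    { τ₁ := 𝟙 _, τ₂ := 𝟙 _, τ₃ := kernel.ι g } (exact_kernel f)

lemma Exact.exact_kernelLift_kernelLift {S : ShortComplex C} (hS : S.Exact) {W W' : C}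
    (u : S.X₂ ⟶ W) (hu : S.f ≫ u = 0) (v : S.X₃ ⟶ W') (hv : (kernel.ι u ≫ S.g) ≫ v = 0) :
    (ShortComplex.mk (kernel.lift u S.f hu) (kernel.lift v (kernel.ι u ≫ S.g) hv)
      (by ext; simp)).Exact :=
  exact_of_epi_τ₁_of_mono_τ₂ (S₂ := S) { τ₁ := 𝟙 _, τ₂ := kernel.ι u, τ₃ := kernel.ι v } hS

lemma Exact.exact_cokernelDesc {S : ShortComplex C} (hS : S.Exact) {W : C} (l : W ⟶ S.X₁)
    (hl : l ≫ S.f = 0) :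
    (ShortComplex.mk (cokernel.desc l S.f hl) S.g (by ext; simp)).Exact :=
  exact_of_epi_τ₂_of_mono_τ₃ { τ₁ := cokernel.π l, τ₂ := 𝟙 _, τ₃ := 𝟙 _ } hS

lemma exact_kernelLift_kernelι_comp_cokernelπ {X Y W : C} {b : X ⟶ Y} {a : Y ⟶ W} {c : X ⟶ W}
    (hc : b ≫ a = c) :
    (ShortComplex.mk (kernel.lift a (kernel.ι c ≫ b) (by simp [hc]))
      (kernel.ι a ≫ cokernel.π b) (by simp)).Exact := by
  rw [exact_iff_exact_up_to_refinements]
  intro A k hk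
  obtain ⟨A', π, hπ, x, hx⟩ :=
    (exact_cokernel b).exact_up_to_refinements (k ≫ kernel.ι a) (by simpa using hk)
  have hxc : x ≫ c = 0 := by
    rw [← hc, ← Category.assoc, ← hx]; simp
  exact ⟨A', π, hπ, kernel.lift c x hxc, by ext; simp [hx]⟩

lemma Exact.exact_comp_cokernelπ {S : ShortComplex C} (hS : S.Exact) {X : C} (b : X ⟶ S.X₂)
    (l : X ⟶ S.X₃) (hl : b ≫ S.g = l) :
    (ShortComplex.mk (S.f ≫ cokernel.π b)
      (cokernel.desc b (S.g ≫ cokernel.π l) (by rw [← Category.assoc, hl, cokernel.condition]))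
      (by simp)).Exact := by
  rw [exact_iff_exact_up_to_refinements]
  intro A y hy
  obtain ⟨A₁, π₁, hπ₁, x, hx⟩ := surjective_up_to_refinements_of_epi (cokernel.π b) y
  have hxl : (x ≫ S.g) ≫ cokernel.π l = 0 := by
    have hxy := π₁ ≫= hy
    rw [comp_zero, reassoc_of% hx] at hxy
    simpa using hxy
  obtain ⟨A₂, π₂, hπ₂, z, hz⟩ := (exact_cokernel l).exact_up_to_refinements _ hxl
  obtain ⟨A₃, π₃, hπ₃, k, hk⟩ := hS.exact_up_to_refinements (π₂ ≫ x - z ≫ b)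
    (by simp [hz, hl])
  refine ⟨A₃, π₃ ≫ π₂ ≫ π₁, inferInstance, k, ?_⟩
  simp [hx, ← reassoc_of% hk]

lemma Exact.exact_cokernelDesc_cokernelDesc {S : ShortComplex C} (hS : S.Exact) {X : C}
    (b : X ⟶ S.X₁) (l : X ⟶ S.X₂) (hl : b ≫ S.f = l) :
    (ShortComplex.mk
      (cokernel.desc b (S.f ≫ cokernel.π l) (by rw [← Category.assoc, hl, cokernel.condition]))
      (cokernel.desc l S.g (by simp [← hl])) (by ext; simp)).Exact := by
  have hS' : (ShortComplex.mk (S.f ≫ cokernel.π l) (cokernel.desc l S.g (by simp [← hl]))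
      (by simp)).Exact :=
    exact_of_epi_τ₂_of_mono_τ₃ { τ₁ := 𝟙 S.X₁, τ₂ := cokernel.π l, τ₃ := 𝟙 S.X₃ } hS
  exact hS'.exact_cokernelDesc b _

end CategoryTheory.ShortComplex

namespace ContraRightFundamentalSeq

universe u v w

variable {R : Type u} [Ring R]
variable (F : (ModuleCat.{v} R)ᵒᵖ ⥤ AddCommGrpCat.{w}) [F.Additive] (D : SyzygyData.{u, v} R)

lemma map_p_op_comp_map_m_op (j : ℕ) : F.map (D.p j).op ≫ F.map (D.m j).op = 0 := by
  rw [← F.map_comp, ← op_comp, D.wmp, op_zero, F.map_zero]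

lemma exact_toK_q (j : ℕ) : (ShortComplex.mk _ _ (toK_comp_q F D j)).Exact :=
  ShortComplex.exact_kernelLift_kernelι_comp_cokernelπ
    (by rw [SyzygyData.d, op_comp, F.map_comp])

lemma exact_conn_q : ∀ j, (ShortComplex.mk _ _ (w₃ F D j)).Exact
  | 0 => exact_toK_q F D 0
  | j + 1 => (exact_toK_q F D (j + 1)).exact_cokernelDesc (l F D j) _

lemma exact_q_toH (j : ℕ) : (ShortComplex.mk _ _ (w₄ F D j)).Exact :=
  (ShortComplex.exact_kernelι_kernelLift _).exact_comp_cokernelπ _ _ (comp_s F D j)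

lemma exact_toH_conn (j : ℕ)
    (hF : (ShortComplex.mk _ _ (map_p_op_comp_map_m_op F D (j + 1))).Exact) :
    (ShortComplex.mk _ _ (w₅ F D j)).Exact :=
  (hF.exact_kernelLift_kernelLift _ _ _ _).exact_cokernelDesc_cokernelDesc _ _ (comp_s F D j)

/-- **The right fundamental sequence of a half-exact contravariant functor (computed with a
projective resolution) is exact.**
Let `F` be an additive half-exact contravariant functor from `R`-modules to abelian groups
and `⋯ → P₁ → P₀ → B → 0` a projective resolution of `B = S 0` with syzygies `Ωʲ B = S j`.
Then the long sequence
`0 → ker(F(B) → F(P₀)) → F(B) → H⁰(F(P_•)) → ker(F(ΩB) → F(P₁)) → coker(F(P₀) → F(ΩB)) →`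
`H¹(F(P_•)) → ker(F(Ω²B) → F(P₂)) → coker(F(P₁) → F(Ω²B)) → H²(F(P_•)) → ⋯`,
with all maps the canonically induced ones, is exact. -/
theorem contra_right_fundamental_sequence_exact
    (hhalf : ∀ ⦃X Y Z : ModuleCat.{v} R⦄ (f : X ⟶ Y) (g : Y ⟶ Z) (w : f ≫ g = 0),
      (ShortComplex.mk f g w).ShortExact →
      (ShortComplex.mk (F.map g.op) (F.map f.op)
        (by rw [← F.map_comp, ← op_comp, w]; exact F.map_zero _ _)).Exact)
    (hres : ∀ j, (ShortComplex.mk (D.m j) (D.p j) (D.wmp j)).ShortExact) :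
    Mono (ι0 F D) ∧
    (ShortComplex.mk _ _ (w₁ F D)).Exact ∧
    (ShortComplex.mk _ _ (w₂ F D)).Exact ∧
    (∀ j, (ShortComplex.mk _ _ (w₃ F D j)).Exact) ∧
    (∀ j, (ShortComplex.mk _ _ (w₄ F D j)).Exact) ∧
    (∀ j, (ShortComplex.mk _ _ (w₅ F D j)).Exact) := by
  have hF (j : ℕ) := hhalf _ _ _ (hres j)
  exact ⟨inferInstanceAs (Mono (kernel.ι _)), ShortComplex.exact_kernelι_kernelLift _,
    (hF 0).exact_kernelLift_kernelLift _ _ _ _, exact_conn_q F D, exact_q_toH F D,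
    fun j ↦ exact_toH_conn F D j (hF (j + 1))⟩

end ContraRightFundamentalSeq
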